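/- If a real multilinear polynomial G of degree at most t over {−1,1}^n agrees with the product function ∏_i x_i on at least a 3/4 fraction of inputs, then t ≥ c·√n for some absolute constant c > 0 (for n sufficiently large). -/

import Mathlib

/-- Map a Boolean to the corresponding element of `{-1, 1} ⊆ ℝ`. -/
noncomputable def chi (b : Bool) : ℝ := if b then 1 else -1

/-!
On the agreement set `A` we have `∏ xᵢ = G`, so for `|S| > n/2` the character
`χ_S = χ_univ · χ_{Sᶜ}` agrees on `A` with `G · χ_{Sᶜ}`, a combination of characters of degree
at most `t + n/2` (because `xᵢ² = 1`, a monomial is the character of its odd-degree variables).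
The characters span all functions on the cube, so the low-degree ones span `ℝ^A`, and
`|A| ≤ ∑_{k ≤ n/2 + t} C(n, k) ≤ 2^(n-1) + (t + 1/2) C(n, n/2)`. Together with
`C(n, n/2) ≤ 2^n / √n` and `|A| ≥ (3/4) 2^n` this forces `√n ≤ 4t + 2`.
-/

open Finset MvPolynomial Submodule

lemma chi_mul_self (b : Bool) : chi b * chi b = 1 := by cases b <;> simp [chi]

lemma chi_pow (b : Bool) (k : ℕ) : chi b ^ k = if Odd k then chi b else 1 := by
  rcases Nat.even_or_odd k with hk | hk
  · simp [Nat.not_odd_iff_even.mpr hk, chi, apply_ite (· ^ k), hk.neg_one_pow]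
  · simp [hk, chi, apply_ite (· ^ k), hk.neg_one_pow]

variable {ι : Type*}

noncomputable def walsh (S : Finset ι) (x : ι → Bool) : ℝ := ∏ i ∈ S, chi (x i)

lemma walsh_mul_walsh [DecidableEq ι] (S T : Finset ι) (x : ι → Bool) :
    walsh S x * walsh T x = walsh (symmDiff S T) x := by
  have hsq : walsh (S ∩ T) x * walsh (S ∩ T) x = 1 := by
    rw [walsh, ← prod_mul_distrib]; exact prod_eq_one fun i _ => chi_mul_self _
  calc walsh S x * walsh T x
      = walsh (S \ T) x * walsh (T \ S) x * (walsh (S ∩ T) x * walsh (S ∩ T) x) := by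
        simp only [walsh, ← prod_inter_mul_prod_sdiff S T, ← prod_inter_mul_prod_sdiff T S,
          inter_comm T S]
        ring
    _ = walsh (symmDiff S T) x := by
        rw [hsq, mul_one, walsh, walsh, walsh, symmDiff_def, sup_eq_union,
          prod_union disjoint_sdiff_sdiff]

lemma walsh_univ_mul_walsh_compl [Fintype ι] [DecidableEq ι] (S : Finset ι) (x : ι → Bool) :
    walsh univ x * walsh Sᶜ x = walsh S x := by
  rw [walsh_mul_walsh, ← top_eq_univ, top_symmDiff, hnot_eq_compl, compl_compl]

lemma sum_walsh_mul_walsh [Fintype ι] (y x : ι → Bool) :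
    ∑ S : Finset ι, walsh S y * walsh S x = if y = x then 2 ^ Fintype.card ι else 0 := by
  classical
  simp_rw [walsh, ← prod_mul_distrib]
  rw [← powerset_univ, ← prod_add_one]
  split_ifs with hyx
  · subst hyx
    norm_num [chi_mul_self]
  · obtain ⟨i, hi⟩ := Function.ne_iff.mp hyx
    refine prod_eq_zero (mem_univ i) ?_
    revert hi
    cases y i <;> cases x i <;> simp [chi]

def oddVars (d : ι →₀ ℕ) : Finset ι := d.support.filter fun i => Odd (d i)

lemma eval_chi_eq_sum_walsh (G : MvPolynomial ι ℝ) (x : ι → Bool) :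
    eval (fun i => chi (x i)) G = ∑ d ∈ G.support, G.coeff d * walsh (oddVars d) x := by
  rw [eval_eq]
  refine sum_congr rfl fun d _ => ?_
  rw [oddVars, walsh, prod_filter]
  simp only [chi_pow]

lemma card_oddVars_le_totalDegree {G : MvPolynomial ι ℝ} {d : ι →₀ ℕ} (hd : d ∈ G.support) :
    (oddVars d).card ≤ G.totalDegree :=
  calc (oddVars d).card ≤ d.support.card := card_filter_le _ _
    _ ≤ d.degree := by
        rw [card_eq_sum_ones, Finsupp.degree]
        exact sum_le_sum fun i hi => Nat.one_le_iff_ne_zero.mpr (Finsupp.mem_support_iff.mp hi)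
    _ ≤ G.totalDegree := le_totalDegree hd

lemma span_range_walsh [Fintype ι] :
    span ℝ (Set.range (walsh : Finset ι → (ι → Bool) → ℝ)) = ⊤ := by
  rw [eq_top_iff, ← (Pi.basisFun ℝ (ι → Bool)).span_eq, span_le]
  rintro _ ⟨y, rfl⟩
  have hy : Pi.basisFun ℝ (ι → Bool) y
      = ((2 : ℝ) ^ Fintype.card ι)⁻¹ • ∑ S, walsh S y • walsh S := by
    ext x
    simp [sum_walsh_mul_walsh, Pi.single_apply, eq_comm]
  rw [hy]
  exact smul_mem _ _ (sum_mem fun S _ => smul_mem _ _ (subset_span ⟨S, rfl⟩))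

lemma span_range_walsh_restrict [Fintype ι] (A : Set (ι → Bool)) :
    span ℝ (Set.range fun (S : Finset ι) (x : A) => walsh S x) = ⊤ := by
  have h := congrArg (map (LinearMap.funLeft ℝ ℝ ((↑) : A → ι → Bool))) span_range_walsh
  rwa [map_span, ← Set.range_comp, Submodule.map_top, LinearMap.range_eq_top.2
    (LinearMap.funLeft_surjective_of_injective _ _ _ Subtype.val_injective)] at h

lemma walsh_restrict_mem_span_of_agree [Fintype ι] [DecidableEq ι] {G : MvPolynomial ι ℝ}
    {A : Set (ι → Bool)}
    (hA : ∀ x ∈ A, eval (fun i => chi (x i)) G = ∏ i, chi (x i)) (S : Finset ι) :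
    (fun x : A => walsh S x) ∈ span ℝ (Set.range fun
      (T : {T : Finset ι // T.card ≤ Fintype.card ι / 2 + G.totalDegree}) (x : A) =>
        walsh T.1 x) := by
  by_cases hS : S.card ≤ Fintype.card ι / 2 + G.totalDegree
  · exact subset_span ⟨⟨S, hS⟩, rfl⟩
  have hsum : (fun x : A => walsh S x)
      = ∑ d ∈ G.support, G.coeff d • fun x : A => walsh (symmDiff (oddVars d) Sᶜ) x := by
    ext ⟨x, hx⟩
    calc walsh S x = eval (fun i => chi (x i)) G * walsh Sᶜ x := by
          rw [hA x hx, ← walsh_univ_mul_walsh_compl S]; rfl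
      _ = ∑ d ∈ G.support, G.coeff d * walsh (symmDiff (oddVars d) Sᶜ) x := by
          simp only [eval_chi_eq_sum_walsh, sum_mul, mul_assoc, walsh_mul_walsh]
      _ = _ := by simp
  rw [hsum]
  refine sum_mem fun d hd => smul_mem _ _ (subset_span ⟨⟨symmDiff (oddVars d) Sᶜ, ?_⟩, rfl⟩)
  have hcompl : Sᶜ.card ≤ Fintype.card ι / 2 := by
    rw [card_compl]; omega
  calc (symmDiff (oddVars d) Sᶜ).card ≤ (oddVars d).card + Sᶜ.card :=
        (card_le_card symmDiff_le_sup).trans (card_union_le _ _)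
    _ ≤ _ := by linarith [card_oddVars_le_totalDegree hd]

lemma card_filter_card_le [Fintype ι] (D : ℕ) :
    #{T : Finset ι | T.card ≤ D} = ∑ k ∈ range (D + 1), (Fintype.card ι).choose k := by
  classical
  rw [card_eq_sum_card_fiberwise (f := card) (t := range (D + 1)) fun T hT =>
    mem_range.2 (Nat.lt_succ_of_le (mem_filter.1 hT).2)]
  refine sum_congr rfl fun k hk => ?_
  rw [filter_filter, ← card_univ, ← card_powersetCard, powersetCard_eq_filter, powerset_univ]
  congr 1
  ext T
  simp only [mem_filter, mem_univ, true_and, and_iff_right_iff_imp]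
  rintro rfl
  simpa [Nat.lt_succ_iff] using hk

lemma card_le_sum_choose_of_agree [Fintype ι] [DecidableEq ι] {G : MvPolynomial ι ℝ}
    {A : Finset (ι → Bool)} (hA : ∀ x ∈ A, eval (fun i => chi (x i)) G = ∏ i, chi (x i)) :
    A.card ≤ ∑ k ∈ range (Fintype.card ι / 2 + G.totalDegree + 1), (Fintype.card ι).choose k := by
  have hspan : span ℝ (Set.range fun
      (T : {T : Finset ι // T.card ≤ Fintype.card ι / 2 + G.totalDegree}) (x : A) => walsh T.1 x)
      = ⊤ := by
    rw [eq_top_iff, ← span_range_walsh_restrict (A : Set (ι → Bool)), span_le]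
    rintro _ ⟨S, rfl⟩
    exact walsh_restrict_mem_span_of_agree hA S
  have h := finrank_le_of_span_eq_top hspan
  rwa [Module.finrank_fintype_fun_eq_card, Fintype.card_coe, Fintype.card_subtype,
    card_filter_card_le] at h

lemma centralBinom_sq_mul_le (m : ℕ) : m.centralBinom ^ 2 * (2 * m + 1) ≤ 16 ^ m := by
  induction m with
  | zero => simp
  | succ m ih =>
    refine Nat.le_of_mul_le_mul_left ?_ (by positivity : 0 < (m + 1) ^ 2)
    calc (m + 1) ^ 2 * ((m + 1).centralBinom ^ 2 * (2 * (m + 1) + 1))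
        = ((m + 1) * (m + 1).centralBinom) ^ 2 * (2 * m + 3) := by ring
      _ = 4 * (2 * m + 1) * (2 * m + 3) * (m.centralBinom ^ 2 * (2 * m + 1)) := by
          rw [Nat.succ_mul_centralBinom_succ]; ring
      _ ≤ 16 * (m + 1) ^ 2 * 16 ^ m := Nat.mul_le_mul (by nlinarith) ih
      _ = (m + 1) ^ 2 * 16 ^ (m + 1) := by ring

lemma choose_half_sq_mul_le (n : ℕ) : n.choose (n / 2) ^ 2 * n ≤ 4 ^ n := by
  obtain ⟨m, rfl | rfl⟩ := Nat.even_or_odd' n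
  · rw [Nat.mul_div_cancel_left m two_pos, ← Nat.centralBinom_eq_two_mul_choose]
    calc m.centralBinom ^ 2 * (2 * m) ≤ m.centralBinom ^ 2 * (2 * m + 1) := by gcongr; omega
      _ ≤ 16 ^ m := centralBinom_sq_mul_le m
      _ = 4 ^ (2 * m) := by rw [pow_mul]; norm_num
  · have hcentral : (m + 1).centralBinom = 2 * (2 * m + 1).choose m := by
      rw [Nat.centralBinom_eq_two_mul_choose, Nat.mul_succ, Nat.choose_succ_succ,
        Nat.choose_symm_half]
      ring
    have h := centralBinom_sq_mul_le (m + 1)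
    rw [hcentral] at h
    rw [show (2 * m + 1) / 2 = m by omega]
    have h16 : 16 ^ (m + 1) = 4 * 4 ^ (2 * m + 1) := by
      rw [pow_succ, pow_succ, pow_mul]; norm_num; ring
    nlinarith

lemma two_mul_sum_range_choose_half_le (n : ℕ) :
    2 * ∑ k ∈ range (n / 2 + 1), n.choose k ≤ 2 ^ n + n.choose (n / 2) := by
  have hreflect : ∑ k ∈ range (n / 2), n.choose k ≤ ∑ k ∈ Ico (n / 2 + 1) (n + 1), n.choose k := by
    calc ∑ k ∈ range (n / 2), n.choose k = ∑ k ∈ (range (n / 2)).image (n - ·), n.choose k := by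
          rw [sum_image fun a ha b hb hab => by simp only [coe_range, Set.mem_Iio] at ha hb; omega]
          exact sum_congr rfl fun k hk =>
            (Nat.choose_symm (by simp only [mem_range] at hk; omega)).symm
      _ ≤ _ := sum_le_sum_of_subset fun k hk => by
        simp only [mem_image, mem_range, mem_Ico] at hk ⊢; omega
  have htotal : ∑ k ∈ range (n / 2 + 1), n.choose k + ∑ k ∈ Ico (n / 2 + 1) (n + 1), n.choose k
      = 2 ^ n := by
    rw [sum_range_add_sum_Ico _ (by omega), Nat.sum_range_choose]
  rw [sum_range_succ] at htotal ⊢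
  omega

lemma two_mul_sum_range_choose_le (n t : ℕ) :
    2 * ∑ k ∈ range (n / 2 + t + 1), n.choose k ≤ 2 ^ n + (2 * t + 1) * n.choose (n / 2) := by
  have htail : ∑ k ∈ Ico (n / 2 + 1) (n / 2 + t + 1), n.choose k ≤ t * n.choose (n / 2) := by
    calc _ ≤ #(Ico (n / 2 + 1) (n / 2 + t + 1)) • n.choose (n / 2) :=
          sum_le_card_nsmul _ _ _ fun k _ => Nat.choose_le_middle k n
      _ = t * n.choose (n / 2) := by simp
  rw [← sum_range_add_sum_Ico _ (by omega : n / 2 + 1 ≤ n / 2 + t + 1)]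
  linarith [two_mul_sum_range_choose_half_le n]

lemma le_sq_of_two_pow_le_mul_choose_half {n K : ℕ} (h : 2 ^ n ≤ K * n.choose (n / 2)) :
    n ≤ K ^ 2 := by
  have hpos : 0 < n.choose (n / 2) ^ 2 := pow_pos (Nat.choose_pos (Nat.div_le_self n 2)) 2
  refine Nat.le_of_mul_le_mul_right ?_ hpos
  calc n * n.choose (n / 2) ^ 2 ≤ 4 ^ n := by linarith [choose_half_sq_mul_le n]
    _ = (2 ^ n) ^ 2 := by rw [← pow_mul, mul_comm, pow_mul]; norm_num
    _ ≤ (K * n.choose (n / 2)) ^ 2 := by gcongr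
    _ = K ^ 2 * n.choose (n / 2) ^ 2 := mul_pow _ _ _

theorem stmt_5 :
    ∃ c : ℝ, 0 < c ∧ ∃ N : ℕ, ∀ n ≥ N, ∀ (t : ℕ) (G : MvPolynomial (Fin n) ℝ),
      G.totalDegree ≤ t →
      3 * 2 ^ n ≤ 4 * (Finset.univ.filter (fun x : Fin n → Bool =>
          MvPolynomial.eval (fun i => chi (x i)) G = ∏ i : Fin n, chi (x i))).card →
      c * Real.sqrt n ≤ t := by
  refine ⟨1 / 8, by norm_num, 16, fun n hn t G hdeg hcard => ?_⟩
  have hagree := card_le_sum_choose_of_agree (A := {x : Fin n → Bool |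
    eval (fun i => chi (x i)) G = ∏ i, chi (x i)}) fun x hx => (mem_filter.1 hx).2
  rw [Fintype.card_fin] at hagree
  have hmono : ∑ k ∈ range (n / 2 + G.totalDegree + 1), n.choose k
      ≤ ∑ k ∈ range (n / 2 + t + 1), n.choose k :=
    sum_le_sum_of_subset (range_subset_range.2 (by omega))
  have hpow : 2 ^ n ≤ (4 * t + 2) * n.choose (n / 2) := by
    linarith [two_mul_sum_range_choose_le n t]
  have hsqrt : √(n : ℝ) ≤ 4 * t + 2 := by
    rw [Real.sqrt_le_left (by positivity)]
    exact_mod_cast le_sq_of_two_pow_le_mul_choose_half hpow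
  have hsqrt_ge : 4 ≤ √(n : ℝ) := Real.le_sqrt_of_sq_le (by norm_num; exact_mod_cast hn)
  linarith
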